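/- arXiv:1311.1032 — 7 statements merged into one kernel-verified Lean document; each statement's English description precedes it below -/
import Mathlib

section
/- Let n ≥ 1 be an integer, let λ₁,…,λₙ and μ₁,…,μₙ be positive real numbers, and let c be a real number, ε > 0, and B, t real numbers with B·t > 1. Suppose ∑_{i=1}^n μᵢ/λᵢ = n·c and ∑_{i=1}^n μᵢ/λᵢ² ≤ n·c + ε, and suppose that for a fixed index k one has ∑_{i≠k} μᵢ < n·c − B·t·ε. Then λₖ/μₖ < 2/((B·t − 1)·ε). -/
/-!
Expanding `μᵢ (λᵢ⁻¹ - 1)² ≥ 0` gives `μᵢ/λᵢ² ≥ 2μᵢ/λᵢ - μᵢ`. Summing this over `i ≠ k` and using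
`∑ μᵢ/λᵢ = nc` turns the bound `∑ μᵢ/λᵢ² ≤ nc + ε` into
`2μₖ/λₖ ≥ nc - ∑_{i≠k} μᵢ - ε > (Bt - 1)ε`.
-/

open Finset

lemma two_mul_div_sub_le_div_sq {mu : ℝ} (hmu : 0 ≤ mu) (lam : ℝ) :
    2 * (mu / lam) - mu ≤ mu / lam ^ 2 := by
  have : 0 ≤ mu * (lam⁻¹ - 1) ^ 2 := mul_nonneg hmu (sq_nonneg _)
  rw [div_eq_mul_inv, div_eq_mul_inv, ← inv_pow]
  nlinarith

lemma Finset.two_mul_sum_div_sub_sum_le_sum_div_sq {ι : Type*} (s : Finset ι)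
    {lam mu : ι → ℝ} (hmu : ∀ i ∈ s, 0 ≤ mu i) :
    2 * ∑ i ∈ s, mu i / lam i - ∑ i ∈ s, mu i ≤ ∑ i ∈ s, mu i / lam i ^ 2 := by
  rw [mul_sum, ← sum_sub_distrib]
  exact sum_le_sum fun i hi => two_mul_div_sub_le_div_sq (hmu i hi) (lam i)

theorem stmt_1_general (n : ℕ) (lam mu : Fin n → ℝ)
    (hmu : ∀ i, 0 < mu i) (c ε B t : ℝ)
    (hε : 0 < ε) (hBt : 1 < B * t)
    (h1 : ∑ i, mu i / lam i = n * c)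
    (h2 : ∑ i, mu i / (lam i) ^ 2 ≤ n * c + ε)
    (k : Fin n)
    (h3 : ∑ i ∈ Finset.univ.erase k, mu i < n * c - B * t * ε) :
    lam k / mu k < 2 / ((B * t - 1) * ε) := by
  have hsplit1 := add_sum_erase univ (fun i => mu i / lam i) (mem_univ k)
  have hsplit2 := add_sum_erase univ (fun i => mu i / lam i ^ 2) (mem_univ k)
  have hk_nonneg : 0 ≤ mu k / lam k ^ 2 := div_nonneg (hmu k).le (sq_nonneg _)
  have herase := (univ.erase k).two_mul_sum_div_sub_sum_le_sum_div_sq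
    (lam := lam) fun i _ => (hmu i).le
  have hD : 0 < (B * t - 1) * ε / 2 :=
    half_pos (mul_pos (sub_pos.2 hBt) hε)
  have hk : (B * t - 1) * ε / 2 < mu k / lam k := by linarith
  calc lam k / mu k = (mu k / lam k)⁻¹ := (inv_div _ _).symm
    _ < ((B * t - 1) * ε / 2)⁻¹ := inv_strictAntiOn hD (hD.trans hk) hk
    _ = 2 / ((B * t - 1) * ε) := inv_div _ _

theorem stmt_1 (n : ℕ) (hn : 1 ≤ n) (lam mu : Fin n → ℝ)
    (hlam : ∀ i, 0 < lam i) (hmu : ∀ i, 0 < mu i) (c ε B t : ℝ)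
    (hε : 0 < ε) (hBt : 1 < B * t)
    (h1 : ∑ i, mu i / lam i = n * c)
    (h2 : ∑ i, mu i / (lam i) ^ 2 ≤ n * c + ε)
    (k : Fin n)
    (h3 : ∑ i ∈ Finset.univ.erase k, mu i < n * c - B * t * ε) :
    lam k / mu k < 2 / ((B * t - 1) * ε) :=
  stmt_1_general n lam mu hmu c ε B t hε hBt h1 h2 k h3
end

section
/- Let n ≥ 1 be an integer, let λ₁,…,λₙ and μ₁,…,μₙ be positive real numbers, and let c be a real number, ε > 0, and B, t real numbers with B·t > 1. Suppose ∑_{i=1}^n μᵢ/λᵢ = n·c, ∑_{i=1}^n μᵢ/λᵢ² ≤ n·c + ε, and for every index k ∈ {1,…,n} one has ∑_{i≠k} μᵢ < n·c − B·t·ε. Then ∑_{k=1}^n λₖ/μₖ < 2n/((B·t − 1)·ε). -/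
/-! At the maximum point every eigenvalue ratio is bounded: by AM-GM, `μ/λ ≤ (μ + μ/λ²)/2`,
so splitting off the `k`-th term of the trace equation and using the bound on `∑ μᵢ/λᵢ²`
together with the cone condition `∑_{i≠k} μᵢ < nc − Btε` gives `μₖ/λₖ > (Bt − 1)ε/2`.
Inverting and summing over `k` yields the trace bound. -/

open Finset

lemma div_le_add_div_sq_div_two {a x : ℝ} (ha : 0 ≤ a) : a / x ≤ (a + a / x ^ 2) / 2 := by
  have : 0 ≤ a * (1 - x⁻¹) ^ 2 := mul_nonneg ha (sq_nonneg _)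
  rw [div_eq_mul_inv, div_eq_mul_inv a (x ^ 2), ← inv_pow]
  nlinarith

lemma half_sub_lt_div_of_sum_div_eq {ι : Type*} [Fintype ι] [DecidableEq ι]
    {lam mu : ι → ℝ} {s ε δ : ℝ} (hmu : ∀ i, 0 ≤ mu i)
    (h1 : ∑ i, mu i / lam i = s) (h2 : ∑ i, mu i / lam i ^ 2 ≤ s + ε)
    (k : ι) (h3 : ∑ i ∈ univ.erase k, mu i < s - δ) :
    (δ - ε) / 2 < mu k / lam k := by
  rw [← add_sum_erase _ _ (mem_univ k)] at h1 h2
  have hAMGM : ∑ i ∈ univ.erase k, mu i / lam i ≤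
      (∑ i ∈ univ.erase k, mu i + ∑ i ∈ univ.erase k, mu i / lam i ^ 2) / 2 := by
    rw [← sum_add_distrib, sum_div]
    exact sum_le_sum fun i _ => div_le_add_div_sq_div_two (hmu i)
  have hk : 0 ≤ mu k / lam k ^ 2 := div_nonneg (hmu k) (sq_nonneg _)
  linarith

theorem stmt_2_general (n : ℕ) (hn : 1 ≤ n) (lam mu : Fin n → ℝ)
    (hmu : ∀ i, 0 < mu i) (c ε B t : ℝ)
    (hε : 0 < ε) (hBt : 1 < B * t)
    (h1 : ∑ i, mu i / lam i = n * c)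
    (h2 : ∑ i, mu i / (lam i) ^ 2 ≤ n * c + ε)
    (h3 : ∀ k : Fin n, ∑ i ∈ Finset.univ.erase k, mu i < n * c - B * t * ε) :
    ∑ k, lam k / mu k < 2 * n / ((B * t - 1) * ε) := by
  have hpos : 0 < (B * t - 1) * ε / 2 := half_pos (mul_pos (sub_pos.2 hBt) hε)
  have hratio (k : Fin n) : lam k / mu k < 2 / ((B * t - 1) * ε) := by
    have hlow := half_sub_lt_div_of_sum_div_eq (fun i => (hmu i).le) h1 h2 k (h3 k)
    rw [show B * t * ε - ε = (B * t - 1) * ε by ring] at hlow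
    rw [← inv_div (mu k), ← inv_div _ (2 : ℝ)]
    exact inv_strictAnti₀ hpos hlow
  calc ∑ k, lam k / mu k < ∑ _k : Fin n, 2 / ((B * t - 1) * ε) :=
        sum_lt_sum_of_nonempty (univ_nonempty_iff.2 ⟨⟨0, hn⟩⟩) fun k _ => hratio k
    _ = 2 * n / ((B * t - 1) * ε) := by
        simp only [sum_const, card_univ, Fintype.card_fin, nsmul_eq_mul]
        ring

theorem stmt_2 (n : ℕ) (hn : 1 ≤ n) (lam mu : Fin n → ℝ)
    (hlam : ∀ i, 0 < lam i) (hmu : ∀ i, 0 < mu i) (c ε B t : ℝ)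
    (hε : 0 < ε) (hBt : 1 < B * t)
    (h1 : ∑ i, mu i / lam i = n * c)
    (h2 : ∑ i, mu i / (lam i) ^ 2 ≤ n * c + ε)
    (h3 : ∀ k : Fin n, ∑ i ∈ Finset.univ.erase k, mu i < n * c - B * t * ε) :
    ∑ k, lam k / mu k < 2 * n / ((B * t - 1) * ε) :=
  stmt_2_general n hn lam mu hmu c ε B t hε hBt h1 h2 h3
end

section
/- For every real number λ with 5/6 < λ < 6/5, there exists a real number a such that 1/(2−λ) < a, 1/(2λ−1) < a, 2(λ+1)/(4λ−1−λ²) + 1/(λ−2) < a, 2(λ+1)/(4λ−1−λ²) + 1/(1−2λ) < a, and a < 3/2, a < 3/(2λ). (Note that for such λ one has 1/2 < λ < 2 and 4λ−1−λ² > 0, so all the displayed expressions are well defined.) -/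
/-!
Every lower bound on `a` lies below `min (3/2) (3/(2l))` on `5/6 < l < 6/5`, so a witness
exists between the largest lower bound and that minimum. After clearing the (positive)
denominators, the two mixed bounds reduce to cubic inequalities in `l`; those for the bound
with `1/(l - 2)` hold for all `5/6 < l < 2`, and, by the symmetry `l ↦ 1/l` of the system,
those for the bound with `1/(1 - 2l)` hold for all `1/2 < l < 6/5`.
-/

section
variable {l : ℝ}

lemma four_mul_sub_one_sub_sq_pos (h1 : 1 / 2 < l) (h2 : l < 2) : 0 < 4 * l - 1 - l ^ 2 := by
  nlinarith

lemma one_div_two_sub_lt_min (h0 : 0 < l) (h : l < 6 / 5) :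
    1 / (2 - l) < min (3 / 2) (3 / (2 * l)) := by
  have hd : 0 < 2 - l := by linarith
  refine lt_min ?_ ?_
  · rw [div_lt_div_iff₀ hd two_pos]; linarith
  · rw [div_lt_div_iff₀ hd (by positivity)]; linarith

lemma one_div_two_mul_sub_one_lt_min (h : 5 / 6 < l) :
    1 / (2 * l - 1) < min (3 / 2) (3 / (2 * l)) := by
  have hd : 0 < 2 * l - 1 := by linarith
  refine lt_min ?_ ?_
  · rw [div_lt_div_iff₀ hd two_pos]; linarith
  · rw [div_lt_div_iff₀ hd (by positivity)]; linarith

lemma two_mul_add_one_div_add_one_div_sub_two_lt_min (h1 : 5 / 6 < l) (h2 : l < 2) :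
    2 * (l + 1) / (4 * l - 1 - l ^ 2) + 1 / (l - 2) < min (3 / 2) (3 / (2 * l)) := by
  have hq := four_mul_sub_one_sub_sq_pos (by linarith) h2
  have hd : 0 < 2 - l := by linarith
  have heq : 2 * (l + 1) / (4 * l - 1 - l ^ 2) + 1 / (l - 2)
      = (5 - 2 * l - l ^ 2) / ((4 * l - 1 - l ^ 2) * (2 - l)) := by
    rw [div_add_div _ _ hq.ne' (by linarith), div_eq_div_iff (by nlinarith) (by positivity)]
    ring
  rw [heq]
  refine lt_min ?_ ?_
  · rw [div_lt_div_iff₀ (by positivity) two_pos]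
    nlinarith [sq_nonneg (l - 1), mul_pos hd hd]
  · rw [div_lt_div_iff₀ (by positivity) (by positivity)]
    nlinarith [sq_nonneg (l - 1), mul_pos hd hd]

lemma two_mul_add_one_div_add_one_div_one_sub_two_mul_lt_min (h1 : 1 / 2 < l) (h2 : l < 6 / 5) :
    2 * (l + 1) / (4 * l - 1 - l ^ 2) + 1 / (1 - 2 * l) < min (3 / 2) (3 / (2 * l)) := by
  have hq := four_mul_sub_one_sub_sq_pos h1 (by linarith)
  have hd : 0 < 2 * l - 1 := by linarith
  have heq : 2 * (l + 1) / (4 * l - 1 - l ^ 2) + 1 / (1 - 2 * l)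
      = (5 * l ^ 2 - 2 * l - 1) / ((4 * l - 1 - l ^ 2) * (2 * l - 1)) := by
    rw [div_add_div _ _ hq.ne' (by linarith), div_eq_div_iff (by nlinarith) (by positivity)]
    ring
  rw [heq]
  refine lt_min ?_ ?_
  · rw [div_lt_div_iff₀ (by positivity) two_pos]
    nlinarith [sq_nonneg (l - 1), mul_pos hd hd]
  · rw [div_lt_div_iff₀ (by positivity) (by positivity)]
    nlinarith [sq_nonneg (l - 1), mul_pos hd hd]

end

theorem stmt_3 (l : ℝ) (h1 : 5 / 6 < l) (h2 : l < 6 / 5) :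
    ∃ a : ℝ,
      1 / (2 - l) < a ∧
      1 / (2 * l - 1) < a ∧
      2 * (l + 1) / (4 * l - 1 - l ^ 2) + 1 / (l - 2) < a ∧
      2 * (l + 1) / (4 * l - 1 - l ^ 2) + 1 / (1 - 2 * l) < a ∧
      a < 3 / 2 ∧ a < 3 / (2 * l) := by
  have hmax : max (max (1 / (2 - l)) (1 / (2 * l - 1)))
      (max (2 * (l + 1) / (4 * l - 1 - l ^ 2) + 1 / (l - 2))
        (2 * (l + 1) / (4 * l - 1 - l ^ 2) + 1 / (1 - 2 * l))) < min (3 / 2) (3 / (2 * l)) :=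
    max_lt (max_lt (one_div_two_sub_lt_min (by linarith) h2) (one_div_two_mul_sub_one_lt_min h1))
      (max_lt (two_mul_add_one_div_add_one_div_sub_two_lt_min h1 (by linarith))
        (two_mul_add_one_div_add_one_div_one_sub_two_mul_lt_min (by linarith) h2))
  obtain ⟨a, hlo, hhi⟩ := exists_between hmax
  simp only [max_lt_iff, lt_min_iff] at hlo hhi
  exact ⟨a, hlo.1.1, hlo.1.2, hlo.2.1, hlo.2.2, hhi⟩
end

section
/- For every real number λ with 4/5 < λ < 10/9, there exists a real number a > 0 such that: (i) (1/a)·min{1, 1/(2−λ)} > 2/3; (ii) if λ ≥ 1 then a > 1/(4−3λ), and if λ < 1 then a > 1/λ; and (iii) setting b = (4−2λ)/(2−λ²) − a, if λ ≥ 1 then b < 1/λ, and if λ < 1 then b < 1/(4−3λ). (Note that for such λ one has 0 < λ < 4/3 and 2 − λ² > 0, so all the displayed expressions are well defined.) -/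
theorem stmt_4 (l : ℝ) (h1 : 4 / 5 < l) (h2 : l < 10 / 9) :
    ∃ a : ℝ, 0 < a ∧
      (1 / a) * min 1 (1 / (2 - l)) > 2 / 3 ∧
      ((1 ≤ l → a > 1 / (4 - 3 * l)) ∧ (l < 1 → a > 1 / l)) ∧
      ((1 ≤ l → (4 - 2 * l) / (2 - l ^ 2) - a < 1 / l) ∧
       (l < 1 → (4 - 2 * l) / (2 - l ^ 2) - a < 1 / (4 - 3 * l))) := by
  have hl0 : (0:ℝ) < l := by linarith
  have h43 : (0:ℝ) < 4 - 3 * l := by linarith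
  have h2l : (0:ℝ) < 2 - l := by linarith
  have hsq : (0:ℝ) < 2 - l ^ 2 := by nlinarith
  rcases le_or_gt 1 l with hc | hc
  · -- λ ≥ 1, take a = (1/(4-3l) + 3/2)/2
    refine ⟨(1 / (4 - 3 * l) + 3 / 2) / 2, ?_, ?_, ⟨?_, ?_⟩, ?_, ?_⟩
    · positivity
    · have hmin : min 1 (1 / (2 - l)) = 1 := by
        rw [min_eq_left]
        rw [le_div_iff₀ h2l]; linarith
      rw [hmin, mul_one]
      have hlt : 1 / (4 - 3 * l) < 3 / 2 := by
        rw [div_lt_div_iff₀ h43 (by norm_num)]; linarith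
      have ha2 : (1 / (4 - 3 * l) + 3 / 2) / 2 < 3 / 2 := by linarith
      rw [gt_iff_lt, lt_div_iff₀ (by positivity)]
      linarith
    · intro _
      have hlt : 1 / (4 - 3 * l) < 3 / 2 := by
        rw [div_lt_div_iff₀ h43 (by norm_num)]; linarith
      linarith
    · intro h; linarith
    · intro _
      have key : (4 - 2 * l) / (2 - l ^ 2) - 1 / l ≤ 1 / (4 - 3 * l) := by
        rw [div_sub_div _ _ (ne_of_gt hsq) (ne_of_gt hl0), div_le_div_iff₀ (by positivity) h43]
        nlinarith [sq_nonneg (l - 1), sq_nonneg l, mul_pos hl0 hsq]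
      have hlt : 1 / (4 - 3 * l) < (1 / (4 - 3 * l) + 3 / 2) / 2 := by
        have : 1 / (4 - 3 * l) < 3 / 2 := by
          rw [div_lt_div_iff₀ h43 (by norm_num)]; linarith
        linarith
      linarith
    · intro h; linarith
  · -- λ < 1, take a = (1/l + 3/(2*(2-l)))/2
    have hkey : 1 / l < 3 / (2 * (2 - l)) := by
      rw [div_lt_div_iff₀ hl0 (by positivity)]; linarith
    refine ⟨(1 / l + 3 / (2 * (2 - l))) / 2, ?_, ?_, ⟨?_, ?_⟩, ?_, ?_⟩
    · positivity
    · have hmin : min 1 (1 / (2 - l)) = 1 / (2 - l) := by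
        rw [min_eq_right]
        rw [div_le_one h2l]; linarith
      rw [hmin]
      set a : ℝ := (1 / l + 3 / (2 * (2 - l))) / 2 with ha
      have ha0 : 0 < a := by positivity
      have ha2 : a < 3 / (2 * (2 - l)) := by rw [ha]; linarith
      have hub : a * (2 - l) < 3 / 2 := by
        have h := mul_lt_mul_of_pos_right ha2 h2l
        have he : 3 / (2 * (2 - l)) * (2 - l) = 3 / 2 := by
          field_simp
        rw [he] at h
        exact h
      have : 1 / a * (1 / (2 - l)) = 1 / (a * (2 - l)) := by
        rw [div_mul_div_comm, one_mul]
      rw [gt_iff_lt, this, lt_div_iff₀ (by positivity)]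
      linarith
    · intro h; linarith
    · intro _; linarith
    · intro h; linarith
    · intro _
      have key : (4 - 2 * l) / (2 - l ^ 2) - 1 / (4 - 3 * l) ≤ 1 / l := by
        rw [div_sub_div _ _ (ne_of_gt hsq) (ne_of_gt h43), div_le_div_iff₀ (by positivity) hl0]
        nlinarith [sq_nonneg (l - 1), sq_nonneg (5 * l - 4), mul_pos hl0 hsq]
      have : 1 / l < (1 / l + 3 / (2 * (2 - l))) / 2 := by linarith
      linarith
end

section
/- Let Q be the symmetric bilinear form on ℝ⁹ (with standard basis e₀, e₁, …, e₈) determined by Q(e₀,e₀) = 1, Q(eᵢ,eᵢ) = −1 for 1 ≤ i ≤ 8, and Q(eᵢ,eⱼ) = 0 for i ≠ j. Set κ = −3e₀ + e₁ + ⋯ + e₈, and call an integer vector v ∈ ℤ⁹ ⊂ ℝ⁹ exceptional if Q(v,v) = −1 and Q(κ,v) = −1. For a real number λ set L_λ = 3e₀ − e₁ − ⋯ − e₇ − λe₈ ∈ ℝ⁹. Then Q(L_λ, v) > 0 for every exceptional vector v if and only if 0 < λ < 4/3. -/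
/-- The intersection form on the Picard lattice ℝ⁹ of the blowup of ℂP² at 8 points:
`Q x y = x₀ y₀ − x₁ y₁ − ⋯ − x₈ y₈`. -/
def picQ (x y : Fin 9 → ℝ) : ℝ :=
  x 0 * y 0 - ∑ i : Fin 8, x i.succ * y i.succ

/-- The canonical class κ = −3e₀ + e₁ + ⋯ + e₈. -/
def picKappa : Fin 9 → ℝ := fun i => if i = 0 then -3 else 1

/-- An integer vector is exceptional if Q(v,v) = −1 and Q(κ,v) = −1. -/
def IsExceptional (v : Fin 9 → ℤ) : Prop :=
  picQ (fun i => (v i : ℝ)) (fun i => (v i : ℝ)) = -1 ∧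
  picQ picKappa (fun i => (v i : ℝ)) = -1

set_option linter.unreachableTactic false in
set_option linter.unusedTactic false in
set_option maxHeartbeats 1000000 in
theorem stmt_7 (l : ℝ) :
    (∀ v : Fin 9 → ℤ, IsExceptional v →
      0 < picQ (fun i => if i = 0 then 3 else if i = 8 then -l else -1)
        (fun i => (v i : ℝ))) ↔ (0 < l ∧ l < 4 / 3) := by
  constructor
  · intro h
    have h1 := h (fun i => if i = 8 then 1 else 0) ?_
    have h2 := h (fun i => if i = 0 then 6 else if i = 8 then -3 else -2) ?_
    · simp [picQ, Fin.sum_univ_eight, show (Fin.succ 2 : Fin 9) = 3 from rfl,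
        show (Fin.succ 3 : Fin 9) = 4 from rfl, show (Fin.succ 4 : Fin 9) = 5 from rfl,
        show (Fin.succ 5 : Fin 9) = 6 from rfl, show (Fin.succ 6 : Fin 9) = 7 from rfl,
        show (Fin.succ 7 : Fin 9) = 8 from rfl] at h1 h2
      exact ⟨by linarith, by linarith⟩
    · constructor <;>
        simp (config := { decide := true }) [picQ, picKappa, Fin.sum_univ_eight,
          show (Fin.succ 2 : Fin 9) = 3 from rfl, show (Fin.succ 3 : Fin 9) = 4 from rfl,
          show (Fin.succ 4 : Fin 9) = 5 from rfl, show (Fin.succ 5 : Fin 9) = 6 from rfl,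
          show (Fin.succ 6 : Fin 9) = 7 from rfl, show (Fin.succ 7 : Fin 9) = 8 from rfl] <;>
        norm_num
    · constructor <;>
        simp (config := { decide := true }) [picQ, picKappa, Fin.sum_univ_eight,
          show (Fin.succ 2 : Fin 9) = 3 from rfl, show (Fin.succ 3 : Fin 9) = 4 from rfl,
          show (Fin.succ 4 : Fin 9) = 5 from rfl, show (Fin.succ 5 : Fin 9) = 6 from rfl,
          show (Fin.succ 6 : Fin 9) = 7 from rfl, show (Fin.succ 7 : Fin 9) = 8 from rfl] <;>
        norm_num
  · rintro ⟨h0, h4⟩ v ⟨hv1, hv2⟩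
    simp [picQ, picKappa, Fin.sum_univ_eight, show (Fin.succ 2 : Fin 9) = 3 from rfl,
      show (Fin.succ 3 : Fin 9) = 4 from rfl, show (Fin.succ 4 : Fin 9) = 5 from rfl,
      show (Fin.succ 5 : Fin 9) = 6 from rfl, show (Fin.succ 6 : Fin 9) = 7 from rfl,
      show (Fin.succ 7 : Fin 9) = 8 from rfl] at hv1 hv2 ⊢
    set a0 : ℝ := (v 0 : ℝ)
    set a1 : ℝ := (v 1 : ℝ)
    set a2 : ℝ := (v 2 : ℝ)
    set a3 : ℝ := (v 3 : ℝ)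
    set a4 : ℝ := (v 4 : ℝ)
    set a5 : ℝ := (v 5 : ℝ)
    set a6 : ℝ := (v 6 : ℝ)
    set a7 : ℝ := (v 7 : ℝ)
    set a8 : ℝ := (v 8 : ℝ)
    have hS : a1+a2+a3+a4+a5+a6+a7 = 1 - 3*a0 - a8 := by linarith
    have hT : a1^2+a2^2+a3^2+a4^2+a5^2+a6^2+a7^2 = a0^2 + 1 - a8^2 := by nlinarith [hv1]
    have hpos : (0:ℝ) ≤ (a1-a2)^2 + (a1-a3)^2 + (a1-a4)^2 + (a1-a5)^2 + (a1-a6)^2 +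
        (a1-a7)^2 + (a2-a3)^2 + (a2-a4)^2 + (a2-a5)^2 + (a2-a6)^2 + (a2-a7)^2 + (a3-a4)^2 +
        (a3-a5)^2 + (a3-a6)^2 + (a3-a7)^2 + (a4-a5)^2 + (a4-a6)^2 + (a4-a7)^2 + (a5-a6)^2 +
        (a5-a7)^2 + (a6-a7)^2 := by positivity
    have key : 7*(a1^2+a2^2+a3^2+a4^2+a5^2+a6^2+a7^2) - (a1+a2+a3+a4+a5+a6+a7)^2 =
        (a1-a2)^2 + (a1-a3)^2 + (a1-a4)^2 + (a1-a5)^2 + (a1-a6)^2 +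
        (a1-a7)^2 + (a2-a3)^2 + (a2-a4)^2 + (a2-a5)^2 + (a2-a6)^2 + (a2-a7)^2 + (a3-a4)^2 +
        (a3-a5)^2 + (a3-a6)^2 + (a3-a7)^2 + (a4-a5)^2 + (a4-a6)^2 + (a4-a7)^2 + (a5-a6)^2 +
        (a5-a7)^2 + (a6-a7)^2 := by ring
    have hCS : (1 - 3*a0 - a8)^2 ≤ 7*(a0^2 + 1 - a8^2) := by
      rw [← hS, ← hT]
      exact sub_nonneg.mp (key ▸ hpos)
    have hb : (a8+3)*(1-a8) ≥ 0 := by nlinarith only [hCS, sq_nonneg (2*a0 + 3*a8 - 3)]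
    have hlo : -3 ≤ a8 := by nlinarith only [hb]
    have hhi : a8 ≤ 1 := by nlinarith only [hb]
    have haux : 0 < (1-a8)*(4-3*l) + (a8+3)*l := by
      rcases le_or_gt a8 (-1) with hc | hc
      · have hx : 0 < (1-a8)*(4-3*l) :=
          mul_pos (by linarith only [hc]) (by linarith only [h4])
        have hy : 0 ≤ (a8+3)*l :=
          mul_nonneg (by linarith only [hlo]) (le_of_lt h0)
        linarith only [hx, hy]
      · have hx : 0 ≤ (1-a8)*(4-3*l) :=
          mul_nonneg (by linarith only [hhi]) (by linarith only [h4])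
        have hy : 0 < (a8+3)*l := mul_pos (by linarith only [hc]) h0
        linarith only [hx, hy]
    nlinarith only [hv2, haux]
end

section
/- Let Q be the symmetric bilinear form on ℝ⁹ (with standard basis e₀, e₁, …, e₈) determined by Q(e₀,e₀) = 1, Q(eᵢ,eᵢ) = −1 for 1 ≤ i ≤ 8, and Q(eᵢ,eⱼ) = 0 for i ≠ j. Set κ = −3e₀ + e₁ + ⋯ + e₈, and call an integer vector v ∈ ℤ⁹ ⊂ ℝ⁹ exceptional if Q(v,v) = −1 and Q(κ,v) = −1. Let λ be a real number with 0 < λ < 4/3, let a > 0, and set M = κ + a·(3e₀ − e₁ − ⋯ − e₇ − λe₈) = (3a−3)e₀ − (a−1)(e₁ + ⋯ + e₇) − (aλ−1)e₈. Then Q(M, v) > 0 for every exceptional vector v if and only if a·λ > 1 and a·(4 − 3λ) > 1. -/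
lemma picQ_expand (x y : Fin 9 → ℝ) : picQ x y =
    x 0 * y 0 - (x 1 * y 1 + x 2 * y 2 + x 3 * y 3 + x 4 * y 4 + x 5 * y 5
      + x 6 * y 6 + x 7 * y 7 + x 8 * y 8) := by
  rw [picQ, Fin.sum_univ_eight]
  norm_num [show ((0:Fin 8).succ : Fin 9) = 1 from rfl, show ((1:Fin 8).succ : Fin 9) = 2 from rfl,
    show ((2:Fin 8).succ : Fin 9) = 3 from rfl, show ((3:Fin 8).succ : Fin 9) = 4 from rfl,
    show ((4:Fin 8).succ : Fin 9) = 5 from rfl, show ((5:Fin 8).succ : Fin 9) = 6 from rfl,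
    show ((6:Fin 8).succ : Fin 9) = 7 from rfl, show ((7:Fin 8).succ : Fin 9) = 8 from rfl]

lemma cs7 (x1 x2 x3 x4 x5 x6 x7 : ℝ) :
    (x1+x2+x3+x4+x5+x6+x7)^2 ≤ 7*(x1^2+x2^2+x3^2+x4^2+x5^2+x6^2+x7^2) := by
  nlinarith [sq_nonneg (x1-x2), sq_nonneg (x1-x3), sq_nonneg (x1-x4), sq_nonneg (x1-x5),
    sq_nonneg (x1-x6), sq_nonneg (x1-x7), sq_nonneg (x2-x3), sq_nonneg (x2-x4), sq_nonneg (x2-x5),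
    sq_nonneg (x2-x6), sq_nonneg (x2-x7), sq_nonneg (x3-x4), sq_nonneg (x3-x5), sq_nonneg (x3-x6),
    sq_nonneg (x3-x7), sq_nonneg (x4-x5), sq_nonneg (x4-x6), sq_nonneg (x4-x7), sq_nonneg (x5-x6),
    sq_nonneg (x5-x7), sq_nonneg (x6-x7)]

lemma key_ineq (l a x0 x1 x2 x3 x4 x5 x6 x7 x8 : ℝ)
    (h1 : 1 < a * l) (h2 : 1 < a * (4 - 3 * l))
    (hq : x0 ^ 2 - (x1^2 + x2^2 + x3^2 + x4^2 + x5^2 + x6^2 + x7^2 + x8^2) = -1)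
    (hk : -3 * x0 - (x1 + x2 + x3 + x4 + x5 + x6 + x7 + x8) = -1) :
    0 < (3 * a - 3) * x0 + (a - 1) * (x1 + x2 + x3 + x4 + x5 + x6 + x7) + (a * l - 1) * x8 := by
  have hcs := cs7 x1 x2 x3 x4 x5 x6 x7
  have hS : x1+x2+x3+x4+x5+x6+x7 = 1 - 3*x0 - x8 := by linarith
  rw [hS] at hcs
  have hkey : (x8+3)*(x8-1) ≤ 0 := by
    nlinarith [hcs, hq, sq_nonneg (2*x0 + 3*(x8-1))]
  have hx8a : -3 ≤ x8 := by nlinarith [hkey]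
  have hx8b : x8 ≤ 1 := by nlinarith [hkey]
  rw [hS]
  rcases le_or_gt 0 (a * (l - 1)) with h | h
  · nlinarith [mul_nonneg h (by linarith : (0:ℝ) ≤ x8 + 3)]
  · nlinarith [mul_nonneg (by linarith : (0:ℝ) ≤ -(a*(l-1))) (by linarith : (0:ℝ) ≤ 1 - x8)]

theorem stmt_8 (l a : ℝ) (hl0 : 0 < l) (hl1 : l < 4 / 3) (ha : 0 < a) :
    (∀ v : Fin 9 → ℤ, IsExceptional v →
      0 < picQ
        (fun i => if i = 0 then 3 * a - 3 else if i = 8 then -(a * l - 1) else -(a - 1))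
        (fun i => (v i : ℝ))) ↔ (1 < a * l ∧ 1 < a * (4 - 3 * l)) := by
  constructor
  · intro h
    constructor
    · have h8 := h (fun i => if i = 8 then 1 else 0) (by
        constructor <;>
          · rw [picQ_expand]
            simp (config := { decide := true }) [picKappa])
      rw [picQ_expand] at h8
      simp (config := { decide := true }) at h8
      linarith
    · have hs := h (fun i => if i = 0 then 6 else if i = 8 then -3 else -2) (by
        constructor <;>
          · rw [picQ_expand]
            simp (config := { decide := true }) [picKappa]
            norm_num)
      rw [picQ_expand] at hs
      simp (config := { decide := true }) at hs
      linarith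
  · rintro ⟨h1, h2⟩ v ⟨hv1, hv2⟩
    rw [picQ_expand] at hv1 hv2 ⊢
    simp (config := { decide := true }) [picKappa] at hv1 hv2 ⊢
    have := key_ineq l a (v 0 : ℝ) (v 1 : ℝ) (v 2 : ℝ) (v 3 : ℝ) (v 4 : ℝ) (v 5 : ℝ) (v 6 : ℝ)
      (v 7 : ℝ) (v 8 : ℝ) h1 h2 (by push_cast; nlinarith [hv1]) (by push_cast; linarith [hv2])
    linarith
end

section
/- Let Q be the symmetric bilinear form on ℝ⁹ (with standard basis e₀, e₁, …, e₈) determined by Q(e₀,e₀) = 1, Q(eᵢ,eᵢ) = −1 for 1 ≤ i ≤ 8, and Q(eᵢ,eⱼ) = 0 for i ≠ j. Set κ = −3e₀ + e₁ + ⋯ + e₈, and call an integer vector v ∈ ℤ⁹ ⊂ ℝ⁹ exceptional if Q(v,v) = −1 and Q(κ,v) = −1. Let λ be a real number with 0 < λ < 4/3, let b be any real number, and set N = (1−b)(3e₀ − e₁ − ⋯ − e₇) − (1−λb)e₈. Then Q(N, v) > 0 for every exceptional vector v if and only if b·λ < 1 and b·(4 − 3λ) < 1. -/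
set_option maxHeartbeats 1000000 in
theorem stmt_9 (l b : ℝ) (hl0 : 0 < l) (hl1 : l < 4 / 3) :
    (∀ v : Fin 9 → ℤ, IsExceptional v →
      0 < picQ
        (fun i => if i = 0 then 3 * (1 - b) else if i = 8 then -(1 - l * b) else -(1 - b))
        (fun i => (v i : ℝ))) ↔ (b * l < 1 ∧ b * (4 - 3 * l) < 1) := by
  constructor
  · intro h
    constructor
    · have h8 := h (fun i => if i = 8 then 1 else 0) (by
        constructor <;>
        · simp (config := { decide := true }) only [picQ, picKappa, Fin.sum_univ_eight]
          norm_num)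
      simp (config := { decide := true }) [picQ, Fin.sum_univ_eight] at h8
      nlinarith [h8]
    · have h6 := h (fun i => if i = 0 then 6 else if i = 8 then -3 else -2) (by
        constructor <;>
        · simp (config := { decide := true }) only [picQ, picKappa, Fin.sum_univ_eight]
          norm_num)
      simp (config := { decide := true }) [picQ, Fin.sum_univ_eight] at h6
      nlinarith [h6]
  · rintro ⟨hbl, hb4⟩ v ⟨h1, h2⟩
    simp (config := { decide := true }) [picQ, picKappa, Fin.sum_univ_eight,
      show (Fin.succ 2 : Fin 9) = 3 from rfl, show (Fin.succ 3 : Fin 9) = 4 from rfl,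
      show (Fin.succ 4 : Fin 9) = 5 from rfl, show (Fin.succ 5 : Fin 9) = 6 from rfl,
      show (Fin.succ 6 : Fin 9) = 7 from rfl, show (Fin.succ 7 : Fin 9) = 8 from rfl] at h1 h2 ⊢
    set x0 : ℝ := (v 0 : ℝ) with hx0
    set x1 : ℝ := (v 1 : ℝ) with hx1
    set x2 : ℝ := (v 2 : ℝ) with hx2
    set x3 : ℝ := (v 3 : ℝ) with hx3
    set x4 : ℝ := (v 4 : ℝ) with hx4
    set x5 : ℝ := (v 5 : ℝ) with hx5
    set x6 : ℝ := (v 6 : ℝ) with hx6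
    set x7 : ℝ := (v 7 : ℝ) with hx7
    set x8 : ℝ := (v 8 : ℝ) with hx8
    have hcs : (x1+x2+x3+x4+x5+x6+x7)^2 ≤ 7*(x1^2+x2^2+x3^2+x4^2+x5^2+x6^2+x7^2) := by
      have hid : 7*(x1^2+x2^2+x3^2+x4^2+x5^2+x6^2+x7^2) - (x1+x2+x3+x4+x5+x6+x7)^2 =
          (x1-x2)^2 + (x1-x3)^2 + (x1-x4)^2 + (x1-x5)^2 + (x1-x6)^2 + (x1-x7)^2 +
          (x2-x3)^2 + (x2-x4)^2 + (x2-x5)^2 + (x2-x6)^2 + (x2-x7)^2 +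
          (x3-x4)^2 + (x3-x5)^2 + (x3-x6)^2 + (x3-x7)^2 +
          (x4-x5)^2 + (x4-x6)^2 + (x4-x7)^2 +
          (x5-x6)^2 + (x5-x7)^2 + (x6-x7)^2 := by ring
      linarith [sq_nonneg (x1-x2), sq_nonneg (x1-x3), sq_nonneg (x1-x4), sq_nonneg (x1-x5),
        sq_nonneg (x1-x6), sq_nonneg (x1-x7), sq_nonneg (x2-x3), sq_nonneg (x2-x4),
        sq_nonneg (x2-x5), sq_nonneg (x2-x6), sq_nonneg (x2-x7), sq_nonneg (x3-x4),
        sq_nonneg (x3-x5), sq_nonneg (x3-x6), sq_nonneg (x3-x7), sq_nonneg (x4-x5),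
        sq_nonneg (x4-x6), sq_nonneg (x4-x7), sq_nonneg (x5-x6), sq_nonneg (x5-x7),
        sq_nonneg (x6-x7), hid]
    have hq : x1^2+x2^2+x3^2+x4^2+x5^2+x6^2+x7^2 = x0^2 + 1 - x8^2 := by linear_combination -h1
    have hs : x1+x2+x3+x4+x5+x6+x7 = 1 - 3*x0 - x8 := by linarith
    have hs2 : (x1+x2+x3+x4+x5+x6+x7)^2 = (1 - 3*x0 - x8)^2 := by rw [hs]
    have hle : (1-3*x0-x8)^2 ≤ 7*(x0^2+1-x8^2) := by rw [← hs2, ← hq]; exact hcs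
    have hm : (x8+3)*(x8-1) ≤ 0 := by
      have hid2 : (2*x0+3*x8-3)^2 + 7*((x8+3)*(x8-1)) =
          2*((1-3*x0-x8)^2 - 7*(x0^2+1-x8^2)) := by ring
      linarith [hle, hid2, sq_nonneg (2*x0+3*x8-3)]
    have hm1 : x8 ≤ 1 := by
      by_contra hx
      push_neg at hx
      have := mul_pos (show (0:ℝ) < x8+3 by linarith) (show (0:ℝ) < x8-1 by linarith)
      linarith
    have hm3 : -3 ≤ x8 := by
      by_contra hx
      push_neg at hx
      have := mul_pos_of_neg_of_neg (show x8+3 < (0:ℝ) by linarith) (show x8-1 < (0:ℝ) by linarith)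
      linarith
    have key : 0 < 1 - b + (b - l*b)*x8 := by
      rcases le_total (b*l) (b*(4-3*l)) with hc|hc
      · have hp := mul_nonneg (show (0:ℝ) ≤ 3+x8 by linarith)
          (show (0:ℝ) ≤ b*(4-3*l)-b*l by linarith)
        have hid3 : 4*(1-b+(b-l*b)*x8) = 4*(1-b*(4-3*l)) + (3+x8)*(b*(4-3*l)-b*l) := by ring
        linarith [hp, hid3]
      · have hp := mul_nonneg (show (0:ℝ) ≤ 1-x8 by linarith)
          (show (0:ℝ) ≤ b*l-b*(4-3*l) by linarith)
        have hid4 : 4*(1-b+(b-l*b)*x8) = 4*(1-b*l) + (1-x8)*(b*l-b*(4-3*l)) := by ring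
        linarith [hp, hid4]
    have hfin : (b-1)*x1+(b-1)*x2+(b-1)*x3+(b-1)*x4+(b-1)*x5+(b-1)*x6+(b-1)*x7+(l*b-1)*x8
        = 3*(1-b)*x0 - (1 - b + (b - l*b)*x8) := by linear_combination (b-1)*hs
    linarith [key, hfin]
end
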